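/- arXiv:1504.04955 — 5 statements merged into one kernel-verified Lean document; each statement's English description precedes it below -/
import Mathlib

section
/- There exists an optimal decompressor: a partial computable function U from binary strings to binary strings such that for every partial computable function D from binary strings to binary strings there is a constant c with K_U(x) ≤ K_D(x) + c for all binary strings x. -/
/-- The plain Kolmogorov complexity of a binary string `x` with respect to a
decompressor `D`: the minimal length of a description `p` with `D p = x`
(`⊤` if there is none). -/
noncomputable def Kc (D : List Bool →. List Bool) (x : List Bool) : ℕ∞ :=
  sInf {n : ℕ∞ | ∃ p : List Bool, x ∈ D p ∧ (p.length : ℕ∞) = n}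

open Nat.Partrec (Code)
open Nat.Partrec.Code

/-- Parse a self-delimiting prefix: count leading `true`s, drop the first
`false`, return the rest. -/
def parsePrefix : List Bool → ℕ × List Bool := fun l =>
  List.recOn l (0, []) fun b l IH => bif b then (IH.1 + 1, IH.2) else (0, l)

lemma parsePrefix_true (l : List Bool) :
    parsePrefix (true :: l) = ((parsePrefix l).1 + 1, (parsePrefix l).2) := rfl

lemma parsePrefix_false (l : List Bool) : parsePrefix (false :: l) = (0, l) := rfl

lemma parsePrefix_spec (e : ℕ) (p : List Bool) :
    parsePrefix (List.replicate e true ++ false :: p) = (e, p) := by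
  induction e with
  | zero => simpa using parsePrefix_false p
  | succ n ih =>
    rw [List.replicate_succ, List.cons_append, parsePrefix_true, ih]

lemma parsePrefix_primrec : Primrec parsePrefix := by
  have hb : Primrec fun x : List Bool × Bool × List Bool × (ℕ × List Bool) =>
      x.2.1 := Primrec.fst.comp Primrec.snd
  have hl : Primrec fun x : List Bool × Bool × List Bool × (ℕ × List Bool) =>
      x.2.2.1 := Primrec.fst.comp (Primrec.snd.comp Primrec.snd)
  have hIH : Primrec fun x : List Bool × Bool × List Bool × (ℕ × List Bool) =>
      x.2.2.2 := Primrec.snd.comp (Primrec.snd.comp Primrec.snd)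
  have h : Primrec₂ fun (_ : List Bool) (x : Bool × List Bool × (ℕ × List Bool)) =>
      bif x.1 then (x.2.2.1 + 1, x.2.2.2) else ((0 : ℕ), x.2.1) :=
    Primrec.cond hb
      (Primrec.pair (Primrec.succ.comp (Primrec.fst.comp hIH)) (Primrec.snd.comp hIH))
      (Primrec.pair (Primrec.const 0) hl)
  exact (Primrec.list_rec Primrec.id (Primrec.const (0, [])) h).of_eq fun l => rfl

/-- The universal decompressor. -/
noncomputable def Udec : List Bool →. List Bool := fun l =>
  ((Denumerable.ofNat Code (parsePrefix l).1).eval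
      (Encodable.encode (parsePrefix l).2)).bind fun n =>
    (Encodable.decode (α := List Bool) n : Option (List Bool))

lemma Udec_partrec : Partrec Udec := by
  have hp := parsePrefix_primrec.to_comp
  have h1 : Computable fun l : List Bool => Denumerable.ofNat Code (parsePrefix l).1 :=
    (Computable.ofNat _).comp (Computable.fst.comp hp)
  have h2 : Computable fun l : List Bool => Encodable.encode (parsePrefix l).2 :=
    Computable.encode.comp (Computable.snd.comp hp)
  have hdec : Computable fun x : List Bool × ℕ =>
      (Encodable.decode (α := List Bool) x.2 : Option (List Bool)) :=
    Computable.decode.comp Computable.snd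
  exact (eval_part.comp h1 h2).bind (Computable.ofOption hdec).to₂

/-- There exists an optimal decompressor: a partial computable `U` such that for
every partial computable decompressor `D` there is a constant `c` with
`K_U(x) ≤ K_D(x) + c` for all binary strings `x`. -/
theorem exists_optimal_decompressor :
    ∃ U : List Bool →. List Bool, Partrec U ∧
      ∀ D : List Bool →. List Bool, Partrec D →
        ∃ c : ℕ, ∀ x : List Bool, Kc U x ≤ Kc D x + (c : ℕ∞) := by
  refine ⟨Udec, Udec_partrec, fun D hD => ?_⟩
  obtain ⟨cD, hcD⟩ := exists_code.1 hD
  set e : ℕ := Encodable.encode cD with he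
  refine ⟨e + 1, fun x => ?_⟩
  have key : ∀ p : List Bool, x ∈ D p →
      x ∈ Udec (List.replicate e true ++ false :: p) := by
    intro p hp
    unfold Udec
    rw [parsePrefix_spec]
    have hc : Denumerable.ofNat Code e = cD := by
      rw [he]; exact Denumerable.ofNat_encode cD
    rw [hc, hcD]
    refine Part.mem_bind_iff.2 ⟨Encodable.encode x, ?_, ?_⟩
    · simp only [Encodable.encodek, Part.coe_some, Part.bind_some]
      exact (Part.mem_map_iff _).2 ⟨x, hp, rfl⟩
    · simp [Encodable.encodek]
  by_cases hne : {n : ℕ∞ | ∃ p : List Bool, x ∈ D p ∧ (p.length : ℕ∞) = n}.Nonempty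
  · obtain ⟨p, hp, hlen⟩ := csInf_mem hne
    calc Kc Udec x ≤ ((List.replicate e true ++ false :: p).length : ℕ∞) :=
          sInf_le ⟨_, key p hp, rfl⟩
      _ = (p.length : ℕ∞) + ((e + 1 : ℕ) : ℕ∞) := by
          simp only [List.length_append, List.length_replicate, List.length_cons]
          push_cast
          ring
      _ = Kc D x + ((e + 1 : ℕ) : ℕ∞) := by rw [Kc, hlen]
  · have hD' : Kc D x = ⊤ := by
      rw [Kc, Set.not_nonempty_iff_eq_empty.1 hne, sInf_empty]
    rw [hD']
    simp
end

section
/- Every computable lower bound for Kolmogorov complexity is bounded: if g is a total computable function from binary strings to ℕ such that g(x) ≤ K(x) for all x, then g is bounded from above by a constant. -/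
/-- `U` is an optimal decompressor. -/
def OptimalDecompressor (U : List Bool →. List Bool) : Prop :=
  Partrec U ∧ ∀ D : List Bool →. List Bool, Partrec D →
    ∃ c : ℕ, ∀ x : List Bool, Kc U x ≤ Kc D x + (c : ℕ∞)

/-!
Berry's paradox. If `g` were an unbounded computable lower bound for `K`, the decompressor sending
a program `p` to the first string `x` (in the enumeration of `List Bool`) with `2 ^ |p| ≤ g x`
would describe a string of complexity at least `2 ^ m` by a program of length `m`, so optimality
would give `2 ^ m ≤ m + c` for every `m`.
-/

theorem Kc_le_length {D : List Bool →. List Bool} {p x : List Bool} (h : x ∈ D p) :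
    Kc D x ≤ p.length :=
  sInf_le ⟨p, h, rfl⟩

section FirstAbove

variable {α : Type*} [Primcodable α]

def firstAbove (g : α → ℕ) (n : ℕ) : Part α :=
  Nat.rfindOpt fun k => (Encodable.decode (α := α) k).bind (Option.guard fun x => n ≤ g x)

theorem partrec_firstAbove {g : α → ℕ} (hg : Computable g) : Partrec (firstAbove g) := by
  have hle : Computable₂ fun (n : ℕ) (x : α) => decide (n ≤ g x) :=
    (Primrec.nat_le.decide.to_comp.comp Computable.fst (hg.comp Computable.snd)).to₂
  refine Partrec.rfindOpt (Computable.option_bind (Computable.decode.comp Computable.snd) ?_)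
  refine (Computable.cond (hle.comp (Computable.fst.comp Computable.fst) Computable.snd)
    (Computable.option_some.comp Computable.snd) (Computable.const none)).to₂.of_eq ?_
  rintro ⟨⟨n, k⟩, x⟩
  by_cases h : n ≤ g x <;> simp [Option.guard, h]

theorem exists_mem_firstAbove {g : α → ℕ} {n : ℕ} (h : ∃ x, n ≤ g x) :
    ∃ y ∈ firstAbove g n, n ≤ g y := by
  obtain ⟨x, hx⟩ := h
  have hdom : (firstAbove g n).Dom :=
    Nat.rfindOpt_dom.2 ⟨Encodable.encode x, x, by simp [Encodable.encodek, Option.guard, hx]⟩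
  obtain ⟨k, hk⟩ := Nat.rfindOpt_spec (Part.get_mem hdom)
  obtain ⟨y, -, hy⟩ := Option.bind_eq_some_iff.1 hk
  obtain ⟨rfl, hy⟩ := Option.guard_eq_some_iff.1 hy
  exact ⟨_, Part.get_mem hdom, of_decide_eq_true hy⟩

end FirstAbove

def berryDecompressor (g : List Bool → ℕ) : List Bool →. List Bool :=
  fun p => firstAbove g (2 ^ p.length)

theorem partrec_berryDecompressor {g : List Bool → ℕ} (hg : Computable g) :
    Partrec (berryDecompressor g) :=
  (partrec_firstAbove hg).comp <|
    (Primrec₂.unpaired'.1 Nat.Primrec.pow).to_comp.comp (Computable.const 2) Computable.list_length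

/-- Every computable lower bound for Kolmogorov complexity is bounded from
above by a constant. -/
theorem computable_lower_bound_bounded
    (U : List Bool →. List Bool) (hU : OptimalDecompressor U)
    (g : List Bool → ℕ) (hg : Computable g)
    (hlb : ∀ x : List Bool, (g x : ℕ∞) ≤ Kc U x) :
    ∃ c : ℕ, ∀ x : List Bool, g x ≤ c := by
  by_contra! hunbdd
  obtain ⟨c, hc⟩ := hU.2 _ (partrec_berryDecompressor hg)
  let p := List.replicate (c + 1) false
  obtain ⟨y, hy, hgy⟩ := exists_mem_firstAbove (g := g) (n := 2 ^ p.length)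
    ((hunbdd _).imp fun _ => le_of_lt)
  have h : ((2 ^ (c + 1) : ℕ) : ℕ∞) ≤ ((c + 1 + c : ℕ) : ℕ∞) :=
    calc ((2 ^ (c + 1) : ℕ) : ℕ∞) ≤ g y := Nat.cast_le.2 (by simpa [p] using hgy)
      _ ≤ Kc U y := hlb y
      _ ≤ Kc (berryDecompressor g) y + c := hc y
      _ ≤ p.length + c := add_le_add_left (Kc_le_length hy) _
      _ = ((c + 1 + c : ℕ) : ℕ∞) := by simp [p]
  have : c < 2 ^ c := Nat.lt_two_pow_self
  rw [Nat.cast_le, pow_succ] at h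
  omega
end

section
/- Encodings-free characterization of complexity: let K' be a function from binary strings to ℕ that is upper semicomputable and such that for some constant M the number of strings x with K'(x) < n is at most M·2^n for every n. Then there exists a constant c such that K(x) ≤ K'(x) + c for all binary strings x. -/
/-- `F` is upper semicomputable: the pointwise limit of a computable family
of nonincreasing (in the second argument) natural-valued functions. -/
def UpperSemicomputable (F : List Bool → ℕ) : Prop :=
  ∃ k : List Bool × ℕ → ℕ, Computable k ∧
    (∀ x n, k (x, n + 1) ≤ k (x, n)) ∧
    (∀ x : List Bool, ∃ N : ℕ, ∀ n ≥ N, k (x, n) = F x)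

/-!
The strings `x` with `K' x < m` number at most `M * 2 ^ m`, and the approximations of `K'` list
them without repetition, in a list that only grows at its end (`x` is appended once
`k (x, t) < m` for some `t`). So `x` is determined by
`m = K' x + 1` together with its position in that list, a number below `2 ^ (m + M)`; writing the
position in exactly `m + M` bits lets the decompressor read `m` off the program length. This
gives a decompressor with `K_D x ≤ K' x + 1 + M`, and optimality of `U` finishes the proof.
-/

section DistinctValues

variable {α : Type*} [DecidableEq α]

def appendIfNew (l : List α) (a : α) : List α := if a ∈ l then l else l ++ [a]

lemma prefix_appendIfNew (l : List α) (a : α) : l <+: appendIfNew l a := by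
  unfold appendIfNew; split_ifs
  exacts [List.prefix_refl l, List.prefix_append l [a]]

lemma mem_appendIfNew {l : List α} {a b : α} : b ∈ appendIfNew l a ↔ b ∈ l ∨ b = a := by
  unfold appendIfNew; split_ifs with h
  · exact ⟨Or.inl, fun hb => hb.elim id (· ▸ h)⟩
  · simp

lemma nodup_appendIfNew {l : List α} (hl : l.Nodup) (a : α) : (appendIfNew l a).Nodup := by
  unfold appendIfNew; split_ifs with h
  exacts [hl, hl.append (List.nodup_singleton a) (by simpa using h)]

def distinctValues (f : ℕ → Option α) : ℕ → List α
  | 0 => []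
  | j + 1 => (f j).elim (distinctValues f j) (appendIfNew (distinctValues f j))

variable (f : ℕ → Option α)

lemma prefix_distinctValues_succ (j : ℕ) : distinctValues f j <+: distinctValues f (j + 1) := by
  cases h : f j <;> simp only [distinctValues, h, Option.elim]
  exacts [List.prefix_refl _, prefix_appendIfNew _ _]

lemma distinctValues_prefix {j j' : ℕ} (h : j ≤ j') :
    distinctValues f j <+: distinctValues f j' := by
  induction j', h using Nat.le_induction with
  | base => exact List.prefix_refl _
  | succ j' _ ih => exact ih.trans (prefix_distinctValues_succ f j')

lemma nodup_distinctValues (j : ℕ) : (distinctValues f j).Nodup := by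
  induction j with
  | zero => exact List.nodup_nil
  | succ j ih =>
    cases h : f j <;> simp only [distinctValues, h, Option.elim, ih, nodup_appendIfNew]

lemma mem_distinctValues {j : ℕ} {a : α} : a ∈ distinctValues f j ↔ ∃ n < j, f n = some a := by
  induction j with
  | zero => simp [distinctValues]
  | succ j ih =>
    cases h : f j <;>
      simp only [distinctValues, h, Option.elim, mem_appendIfNew, ih, Nat.lt_succ_iff_lt_or_eq] <;>
      grind

lemma computable₂_distinctValues {β : Type*} [Primcodable α] [Primcodable β]
    {f : β → ℕ → Option α} (hf : Computable₂ f) :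
    Computable₂ fun b j => distinctValues (f b) j := by
  have hmem : PrimrecRel fun (l : List α) (a : α) => a ∈ l :=
    (PrimrecRel.exists_mem_list Primrec.eq).of_eq fun l a => by simp
  have happend : Primrec₂ (appendIfNew (α := α)) :=
    Primrec.ite hmem Primrec.fst (Primrec.list_concat.comp Primrec.fst Primrec.snd)
  have hstep : Computable₂ fun (b : β) (p : ℕ × List α) =>
      (f b p.1).elim p.2 (appendIfNew p.2) :=
    (Computable.option_casesOn (hf.comp Computable.fst (Computable.fst.comp Computable.snd))
      (Computable.snd.comp Computable.snd)
      (happend.to_comp.comp (Computable.snd.comp (Computable.snd.comp Computable.fst))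
        Computable.snd).to₂).of_eq fun p => by
      simp only; cases f p.1 p.2.1 <;> rfl
  refine (Computable.nat_rec Computable.snd (Computable.const [])
    (hstep.comp (Computable.fst.comp Computable.fst) Computable.snd).to₂).of_eq fun ⟨b, j⟩ => ?_
  induction j <;> simp_all [distinctValues]

end DistinctValues

lemma List.Nodup.length_le_ncard {α : Type*} {l : List α} (hl : l.Nodup) {s : Set α}
    (hs : s.Finite) (h : ∀ x ∈ l, x ∈ s) : l.length ≤ s.ncard := by
  classical
  rw [← List.toFinset_card_of_nodup hl, ← Set.ncard_coe_finset]
  exact Set.ncard_le_ncard (fun x hx => h x (List.mem_toFinset.1 hx)) hs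

lemma mem_rfindOpt_getElem? {α : Type*} {L : ℕ → List α} (hL : ∀ {j j'}, j ≤ j' → L j <+: L j')
    {i j : ℕ} {x : α} (h : (L j)[i]? = some x) : x ∈ Nat.rfindOpt fun j => (L j)[i]? := by
  have hmono : ∀ {a j j'}, j ≤ j' → a ∈ (L j)[i]? → a ∈ (L j')[i]? := by
    intro a j j' hjj' ha
    obtain ⟨hi, rfl⟩ := List.getElem?_eq_some_iff.1 ha
    exact List.prefix_iff_getElem?.1 (hL hjj') i hi
  exact (Nat.rfindOpt_mono hmono).2 ⟨j, h⟩

def natOfBits (l : List Bool) : ℕ := l.foldr (fun b n => b.toNat + 2 * n) 0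

def bitsOfNat : ℕ → ℕ → List Bool
  | 0, _ => []
  | ℓ + 1, i => i.bodd :: bitsOfNat ℓ i.div2

@[simp] lemma length_bitsOfNat (ℓ i : ℕ) : (bitsOfNat ℓ i).length = ℓ := by
  induction ℓ generalizing i <;> simp [bitsOfNat, *]

lemma natOfBits_bitsOfNat {ℓ i : ℕ} (h : i < 2 ^ ℓ) : natOfBits (bitsOfNat ℓ i) = i := by
  induction ℓ generalizing i with
  | zero => simp_all [bitsOfNat, natOfBits]
  | succ ℓ ih =>
    have hdiv : i.div2 < 2 ^ ℓ := by rw [Nat.div2_val]; omega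
    change i.bodd.toNat + 2 * natOfBits (bitsOfNat ℓ i.div2) = i
    rw [ih hdiv, Nat.bodd_add_div2]

lemma primrec_natOfBits : Primrec natOfBits :=
  Primrec.list_foldr Primrec.id (Primrec.const 0)
    (Primrec.nat_add.comp ((Primrec.dom_bool Bool.toNat).comp (Primrec.fst.comp Primrec.snd))
      (Primrec.nat_mul.comp (Primrec.const 2) (Primrec.snd.comp Primrec.snd))).to₂

section Listing

lemma le_approx_of_antitone {α : Type*} {k : α × ℕ → ℕ} {F : α → ℕ}
    (hmono : ∀ x n, k (x, n + 1) ≤ k (x, n)) (hlim : ∀ x, ∃ N, ∀ n ≥ N, k (x, n) = F x)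
    (x : α) (t : ℕ) : F x ≤ k (x, t) := by
  obtain ⟨N, hN⟩ := hlim x
  calc F x = k (x, max t N) := (hN _ (le_max_right t N)).symm
    _ ≤ k (x, t) := antitone_nat_of_succ_le (f := fun n => k (x, n)) (hmono x) (le_max_left t N)

variable {α : Type*} [Primcodable α] {k : α × ℕ → ℕ} {F : α → ℕ}

variable (k) in
def enumApproxLt (m n : ℕ) : Option α :=
  (Encodable.decode n : Option (α × ℕ)).bind fun q => if k q < m then some q.1 else none

lemma exists_approx_lt_of_enumApproxLt {m n : ℕ} {x : α} (h : enumApproxLt k m n = some x) :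
    ∃ t, k (x, t) < m := by
  simp only [enumApproxLt, Option.bind_eq_some_iff, Option.ite_none_right_eq_some,
    Option.some.injEq] at h
  obtain ⟨⟨y, t⟩, -, hlt, rfl⟩ := h
  exact ⟨t, hlt⟩

lemma enumApproxLt_encode {m t : ℕ} {x : α} (h : k (x, t) < m) :
    enumApproxLt k m (Encodable.encode (x, t)) = some x := by
  simp [enumApproxLt, h]

lemma computable₂_enumApproxLt (hk : Computable k) : Computable₂ (enumApproxLt k) := by
  refine Computable.option_bind (Computable.decode.comp Computable.snd) ?_
  exact (Computable.cond
    (Primrec.nat_lt.decide.to_comp.comp (hk.comp Computable.snd)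
      (Computable.fst.comp Computable.fst))
    (Computable.option_some.comp (Computable.fst.comp Computable.snd))
    (Computable.const none)).of_eq fun _ => Bool.cond_decide _ _ _

variable [DecidableEq α]

lemma length_distinctValues_enumApproxLt_le (hmono : ∀ x n, k (x, n + 1) ≤ k (x, n))
    (hlim : ∀ x, ∃ N, ∀ n ≥ N, k (x, n) = F x) {m : ℕ} (hfin : {x | F x < m}.Finite) (j : ℕ) :
    (distinctValues (enumApproxLt k m) j).length ≤ {x | F x < m}.ncard := by
  refine (nodup_distinctValues _ j).length_le_ncard hfin fun x hx => ?_
  obtain ⟨n, -, hn⟩ := (mem_distinctValues _).1 hx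
  obtain ⟨t, ht⟩ := exists_approx_lt_of_enumApproxLt hn
  exact (le_approx_of_antitone hmono hlim x t).trans_lt ht

variable (k) in
/-- The length of `p` encodes the threshold `m = p.length - M`, its bits a position in the
repetition-free list of the `x` with some `k (x, t) < m`. -/
def listingDecompressor (M : ℕ) : List Bool →. α := fun p =>
  Nat.rfindOpt fun j => (distinctValues (enumApproxLt k (p.length - M)) j)[natOfBits p]?

lemma partrec_listingDecompressor (hk : Computable k) (M : ℕ) :
    Partrec (listingDecompressor k M) := by
  have hlist : Computable₂ fun (p : List Bool) j =>
      distinctValues (enumApproxLt k (p.length - M)) j :=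
    (computable₂_distinctValues (computable₂_enumApproxLt hk)).comp
      (Primrec.nat_sub.comp (Primrec.list_length.comp Primrec.fst) (Primrec.const M)).to_comp
      Computable.snd
  exact Partrec.rfindOpt
    (Computable.list_getElem?.comp hlist (primrec_natOfBits.comp Primrec.fst).to_comp).to₂

lemma exists_mem_listingDecompressor_length_eq (hmono : ∀ x n, k (x, n + 1) ≤ k (x, n))
    (hlim : ∀ x, ∃ N, ∀ n ≥ N, k (x, n) = F x) {M : ℕ}
    (hcount : ∀ n, {x | F x < n}.Finite ∧ {x | F x < n}.ncard ≤ M * 2 ^ n) (x : α) :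
    ∃ p, x ∈ listingDecompressor k M p ∧ p.length = F x + 1 + M := by
  set m := F x + 1
  obtain ⟨N, hN⟩ := hlim x
  have hx : x ∈ distinctValues (enumApproxLt k m) (Encodable.encode (x, N) + 1) :=
    (mem_distinctValues _).2
      ⟨_, Nat.lt_succ_self _, enumApproxLt_encode (hN N le_rfl ▸ Nat.lt_succ_self _)⟩
  obtain ⟨i, hi⟩ := List.mem_iff_getElem?.1 hx
  have hi_lt : i < 2 ^ (m + M) :=
    calc i < (distinctValues (enumApproxLt k m) (Encodable.encode (x, N) + 1)).length :=
          (List.getElem?_eq_some_iff.1 hi).1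
      _ ≤ M * 2 ^ m :=
          (length_distinctValues_enumApproxLt_le hmono hlim (hcount m).1 _).trans (hcount m).2
      _ ≤ 2 ^ M * 2 ^ m := Nat.mul_le_mul_right _ Nat.lt_two_pow_self.le
      _ = 2 ^ (m + M) := by rw [← pow_add, add_comm]
  refine ⟨bitsOfNat (m + M) i, ?_, length_bitsOfNat _ _⟩
  simp only [listingDecompressor, length_bitsOfNat, natOfBits_bitsOfNat hi_lt, Nat.add_sub_cancel]
  exact mem_rfindOpt_getElem? (distinctValues_prefix _) hi

end Listing

lemma kc_le_of_mem {D : List Bool →. List Bool} {x p : List Bool} (h : x ∈ D p) :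
    Kc D x ≤ p.length :=
  sInf_le ⟨p, h, rfl⟩

/-- Encodings-free characterization of complexity: if `K'` is upper
semicomputable and the number of strings with `K'(x) < n` is at most `M·2^n`,
then `K(x) ≤ K'(x) + c` for some constant `c`. -/
theorem encodings_free_characterization
    (U : List Bool →. List Bool) (hU : OptimalDecompressor U)
    (K' : List Bool → ℕ) (hK' : UpperSemicomputable K')
    (M : ℕ)
    (hcount : ∀ n : ℕ, {x : List Bool | K' x < n}.Finite ∧
      {x : List Bool | K' x < n}.ncard ≤ M * 2 ^ n) :
    ∃ c : ℕ, ∀ x : List Bool, Kc U x ≤ (K' x : ℕ∞) + (c : ℕ∞) := by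
  obtain ⟨k, hk, hmono, hlim⟩ := hK'
  obtain ⟨c, hc⟩ := hU.2 _ (partrec_listingDecompressor hk M)
  refine ⟨1 + M + c, fun x => ?_⟩
  obtain ⟨p, hp, hlen⟩ := exists_mem_listingDecompressor_length_eq hmono hlim hcount x
  calc Kc U x ≤ Kc (listingDecompressor k M) x + c := hc x
    _ ≤ (K' x + 1 + M : ℕ) + c := by grw [kc_le_of_mem hp, hlen]
    _ = K' x + (1 + M + c : ℕ) := by push_cast; ring
end

section
/- There exists an optimal conditional decompressor: a partial computable function U₂ taking pairs of binary strings to binary strings such that for every partial computable function D taking pairs of binary strings to binary strings there is a constant c with K_{U₂}(x|y) ≤ K_D(x|y) + c for all binary strings x and y. -/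
/-!
Every partial computable `D` is the function computed by some code `e`. The universal
decompressor reads a program `1ᵉ0 p`, whose unary prefix is self-delimiting, and runs code `e`
on `(p, y)`. A shortest `D`-program thus becomes a universal one that is `e + 1` bits longer.
-/

/-- Conditional Kolmogorov complexity of `x` given `y` with respect to a
conditional decompressor `D`: the minimal length of `p` with `D (p, y) = x`. -/
noncomputable def KcCond (D : List Bool × List Bool →. List Bool)
    (x y : List Bool) : ℕ∞ :=
  sInf {n : ℕ∞ | ∃ p : List Bool, x ∈ D (p, y) ∧ (p.length : ℕ∞) = n}

open Nat.Partrec (Code)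
open Nat.Partrec.Code Encodable Denumerable

theorem KcCond_le_add_of_simulates {D U : List Bool × List Bool →. List Bool} {x y : List Bool}
    {c : ℕ}
    (h : ∀ p, x ∈ D (p, y) → ∃ q, x ∈ U (q, y) ∧ q.length ≤ p.length + c) :
    KcCond U x y ≤ KcCond D x y + c := by
  rw [show KcCond D x y + c = _ from ENat.sInf_add]
  refine le_iInf₂ ?_
  rintro _ ⟨p, hp, rfl⟩
  obtain ⟨q, hq, hlen⟩ := h p hp
  calc KcCond U x y ≤ q.length := sInf_le ⟨q, hq, rfl⟩
    _ ≤ p.length + c := by exact_mod_cast hlen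

section UnaryPrefix

def unaryPrefix (n : ℕ) (p : List Bool) : List Bool :=
  List.replicate n true ++ false :: p

def splitUnaryPrefix (q : List Bool) : ℕ × List Bool :=
  (q.idxOf false, q.drop (q.idxOf false + 1))

@[simp]
theorem length_unaryPrefix (n : ℕ) (p : List Bool) :
    (unaryPrefix n p).length = p.length + (n + 1) := by
  simp [unaryPrefix]
  omega

theorem idxOf_false_unaryPrefix (n : ℕ) (p : List Bool) :
    (unaryPrefix n p).idxOf false = n := by
  induction n with
  | zero => simp [unaryPrefix]
  | succ n ih => simpa [unaryPrefix, List.replicate_succ, List.idxOf_cons] using ih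

@[simp]
theorem splitUnaryPrefix_unaryPrefix (n : ℕ) (p : List Bool) :
    splitUnaryPrefix (unaryPrefix n p) = (n, p) := by
  simp only [splitUnaryPrefix, idxOf_false_unaryPrefix, Prod.mk.injEq, true_and]
  simpa [unaryPrefix] using
    List.drop_length_add_append (l₁ := List.replicate n true) (l₂ := false :: p) 1

theorem primrec_splitUnaryPrefix : Primrec splitUnaryPrefix :=
  have hidx : Primrec fun q : List Bool => q.idxOf false :=
    Primrec.list_idxOf.comp (.const false) Primrec.id
  hidx.pair (Primrec.list_drop.comp (Primrec.succ.comp hidx) Primrec.id)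

end UnaryPrefix

noncomputable def universalDecompressor : List Bool × List Bool →. List Bool := fun a =>
  (eval (ofNat Code (splitUnaryPrefix a.1).1) (encode ((splitUnaryPrefix a.1).2, a.2))).bind
    fun m => (decode m : Option (List Bool))

theorem partrec_universalDecompressor : Partrec universalDecompressor := by
  have hsplit : Computable fun a : List Bool × List Bool => splitUnaryPrefix a.1 :=
    (primrec_splitUnaryPrefix.comp Primrec.fst).to_comp
  have hcode := (Computable.ofNat Code).comp (Computable.fst.comp hsplit)
  have harg := Computable.encode.comp ((Computable.snd.comp hsplit).pair Computable.snd)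
  exact (eval_part.comp hcode harg).bind (Computable.decode.comp Computable.snd).ofOption

theorem mem_universalDecompressor_unaryPrefix {D : List Bool × List Bool →. List Bool}
    {c : Code}
    (hc : eval c = fun n => Part.bind (decode (α := List Bool × List Bool) n) fun a =>
      (D a).map encode)
    {x p y : List Bool} (h : x ∈ D (p, y)) :
    x ∈ universalDecompressor (unaryPrefix (encode c) p, y) := by
  simp only [universalDecompressor, splitUnaryPrefix_unaryPrefix, ofNat_encode, hc,
    encodek, Part.mem_bind_iff]
  exact ⟨encode x, ⟨(p, y), Part.mem_some _, Part.mem_map encode h⟩, by simp⟩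

/-- There exists an optimal conditional decompressor. -/
theorem exists_optimal_conditional_decompressor :
    ∃ U₂ : List Bool × List Bool →. List Bool, Partrec U₂ ∧
      ∀ D : List Bool × List Bool →. List Bool, Partrec D →
        ∃ c : ℕ, ∀ x y : List Bool, KcCond U₂ x y ≤ KcCond D x y + (c : ℕ∞) := by
  refine ⟨universalDecompressor, partrec_universalDecompressor, fun D hD => ?_⟩
  obtain ⟨c, hc⟩ := exists_code.1 hD
  refine ⟨encode c + 1, fun x y => KcCond_le_add_of_simulates fun p hp => ?_⟩
  exact ⟨unaryPrefix (encode c) p, mem_universalDecompressor_unaryPrefix hc hp,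
    (length_unaryPrefix _ _).le⟩
end

section
/- Kraft inequality for prefix complexity: ∑_x 2^{−KP(x)} ≤ 1, where the sum is over all binary strings x (with 2^{−∞} = 0). -/
open scoped ENNReal

/-- `D` is a prefix function. -/
def PrefixFn (D : List Bool →. List Bool) : Prop :=
  ∀ p q : List Bool, p <+: q → p ≠ q → (D p).Dom → ¬(D q).Dom

/-- `U` is an optimal prefix decompressor. -/
def OptimalPrefixDecompressor (U : List Bool →. List Bool) : Prop :=
  Partrec U ∧ PrefixFn U ∧
    ∀ D : List Bool →. List Bool, Partrec D → PrefixFn D →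
      ∃ c : ℕ, ∀ x : List Bool, Kc U x ≤ Kc D x + (c : ℕ∞)

/-- `2^{−e}` for `e : ℕ∞`, with `2^{−∞} = 0`. -/
noncomputable def twoPowNeg (e : ℕ∞) : ℝ≥0∞ :=
  if e = ⊤ then 0 else (2 : ℝ≥0∞) ^ (-(e.toNat : ℤ))

/-- The finite set of all binary strings of length `m`. -/
noncomputable def cubeBS (m : ℕ) : Finset (List Bool) :=
  (Finset.univ : Finset (List.Vector Bool m)).image List.Vector.toList

lemma mem_cubeBS {m : ℕ} {l : List Bool} : l ∈ cubeBS m ↔ l.length = m := by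
  simp only [cubeBS, Finset.mem_image, Finset.mem_univ, true_and]
  constructor
  · rintro ⟨v, rfl⟩; exact v.toList_length
  · intro h; exact ⟨⟨l, h⟩, rfl⟩

lemma card_cubeBS (m : ℕ) : (cubeBS m).card = 2 ^ m := by
  rw [cubeBS, Finset.card_image_of_injective _ List.Vector.toList_injective,
    Finset.card_univ, card_vector]
  simp

/-- All length-`n` extensions of `p`. -/
noncomputable def extBS (n : ℕ) (p : List Bool) : Finset (List Bool) :=
  (cubeBS (n - p.length)).image (p ++ ·)

lemma card_extBS (n : ℕ) (p : List Bool) : (extBS n p).card = 2 ^ (n - p.length) := by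
  rw [extBS, Finset.card_image_of_injective _ (fun a b h => List.append_cancel_left h),
    card_cubeBS]

lemma extBS_subset_cubeBS {n : ℕ} {p : List Bool} (hp : p.length ≤ n) :
    extBS n p ⊆ cubeBS n := by
  intro l hl
  rw [extBS, Finset.mem_image] at hl
  obtain ⟨q, hq, rfl⟩ := hl
  rw [mem_cubeBS] at hq ⊢
  simp [hq]
  omega

lemma prefix_of_mem_extBS {n : ℕ} {p l : List Bool} (hl : l ∈ extBS n p) : p <+: l := by
  rw [extBS, Finset.mem_image] at hl
  obtain ⟨q, _, rfl⟩ := hl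
  exact List.prefix_append p q

/-- Kraft inequality for finite prefix-free sets. -/
lemma kraft_finset (F : Finset (List Bool))
    (hF : ∀ p ∈ F, ∀ q ∈ F, p <+: q → p = q) :
    ∑ p ∈ F, (2 : ℝ≥0∞) ^ (-(p.length : ℤ)) ≤ 1 := by
  classical
  set n := F.sup List.length with hn
  have hlen : ∀ p ∈ F, p.length ≤ n := fun p hp => Finset.le_sup (f := List.length) hp
  have hdisj : ∀ p ∈ F, ∀ q ∈ F, p ≠ q → Disjoint (extBS n p) (extBS n q) := by
    intro p hp q hq hne
    refine Finset.disjoint_left.mpr fun l hlp hlq => ?_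
    have h1 := prefix_of_mem_extBS hlp
    have h2 := prefix_of_mem_extBS hlq
    rcases List.prefix_or_prefix_of_prefix h1 h2 with h | h
    · exact hne (hF p hp q hq h)
    · exact hne ((hF q hq p hp h).symm)
  have hcard : ∑ p ∈ F, 2 ^ (n - p.length) ≤ 2 ^ n := by
    calc ∑ p ∈ F, 2 ^ (n - p.length) = ∑ p ∈ F, (extBS n p).card :=
          Finset.sum_congr rfl fun p _ => (card_extBS n p).symm
      _ = (F.biUnion (extBS n)).card := (Finset.card_biUnion hdisj).symm
      _ ≤ (cubeBS n).card := Finset.card_le_card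
          (Finset.biUnion_subset.mpr fun p hp => extBS_subset_cubeBS (hlen p hp))
      _ = 2 ^ n := card_cubeBS n
  have hcast : ∑ p ∈ F, (2 : ℝ≥0∞) ^ (n - p.length) ≤ 2 ^ n := by
    exact_mod_cast (Nat.cast_le (α := ℝ≥0∞)).mpr hcard
  have key : ∑ p ∈ F, (2 : ℝ≥0∞) ^ (-(p.length : ℤ)) =
      (2 : ℝ≥0∞) ^ (-(n : ℤ)) * ∑ p ∈ F, (2 : ℝ≥0∞) ^ (n - p.length) := by
    rw [Finset.mul_sum]
    refine Finset.sum_congr rfl fun p hp => ?_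
    have hple := hlen p hp
    have h1 : (-(p.length : ℤ)) = (-(n : ℤ)) + ((n - p.length : ℕ) : ℤ) := by
      omega
    rw [h1, ENNReal.zpow_add (by norm_num) (by norm_num), zpow_natCast]
  rw [key]
  calc (2 : ℝ≥0∞) ^ (-(n : ℤ)) * ∑ p ∈ F, (2 : ℝ≥0∞) ^ (n - p.length)
      ≤ (2 : ℝ≥0∞) ^ (-(n : ℤ)) * 2 ^ n := mul_le_mul_right hcast _
    _ = 1 := by
        rw [← zpow_natCast (2 : ℝ≥0∞) n, ← ENNReal.zpow_add (by norm_num) (by norm_num)]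
        simp

/-- Kraft inequality for prefix complexity: `∑_x 2^{−KP(x)} ≤ 1`. -/
theorem kraft_inequality_for_prefix_complexity
    (U : List Bool →. List Bool) (hU : OptimalPrefixDecompressor U) :
    ∑' x : List Bool, twoPowNeg (Kc U x) ≤ 1 := by
  classical
  obtain ⟨-, hpf, -⟩ := hU
  have hw : ∀ x : List Bool, Kc U x ≠ ⊤ →
      ∃ p : List Bool, x ∈ U p ∧ (p.length : ℕ∞) = Kc U x := by
    intro x hx
    have hne : {n : ℕ∞ | ∃ p : List Bool, x ∈ U p ∧ (p.length : ℕ∞) = n}.Nonempty := by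
      by_contra h
      rw [Set.not_nonempty_iff_eq_empty] at h
      exact hx (by rw [Kc, h, sInf_empty])
    exact csInf_mem hne
  set w : List Bool → List Bool := fun x =>
    if h : Kc U x ≠ ⊤ then (hw x h).choose else [] with hwdef
  have hwspec : ∀ x : List Bool, Kc U x ≠ ⊤ →
      x ∈ U (w x) ∧ ((w x).length : ℕ∞) = Kc U x := by
    intro x hx
    simp only [hwdef, dif_pos hx]
    exact (hw x hx).choose_spec
  rw [ENNReal.tsum_eq_iSup_sum]
  refine iSup_le fun F => ?_
  set F' : Finset (List Bool) := F.filter (fun x => Kc U x ≠ ⊤) with hF'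
  have hsum1 : ∑ x ∈ F, twoPowNeg (Kc U x) = ∑ x ∈ F', twoPowNeg (Kc U x) := by
    refine (Finset.sum_filter_of_ne fun x _ h => ?_).symm
    intro htop
    exact h (by simp [twoPowNeg, htop])
  have hsum2 : ∑ x ∈ F', twoPowNeg (Kc U x) =
      ∑ x ∈ F', (2 : ℝ≥0∞) ^ (-((w x).length : ℤ)) := by
    refine Finset.sum_congr rfl fun x hx => ?_
    rw [hF', Finset.mem_filter] at hx
    obtain ⟨_, hxt⟩ := hx
    obtain ⟨_, hlen⟩ := hwspec x hxt
    have : (Kc U x).toNat = (w x).length := by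
      rw [← hlen]; simp
    rw [twoPowNeg, if_neg hxt, this]
  have hinj : ∀ x ∈ F', ∀ y ∈ F', w x = w y → x = y := by
    intro x hx y hy hxy
    rw [hF', Finset.mem_filter] at hx hy
    have h1 := (hwspec x hx.2).1
    have h2 := (hwspec y hy.2).1
    rw [hxy] at h1
    exact Part.mem_unique h1 h2
  have hsum3 : ∑ x ∈ F', (2 : ℝ≥0∞) ^ (-((w x).length : ℤ)) =
      ∑ q ∈ F'.image w, (2 : ℝ≥0∞) ^ (-(q.length : ℤ)) :=
    by rw [Finset.sum_image hinj]
  rw [hsum1, hsum2, hsum3]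
  refine kraft_finset _ ?_
  intro p hp q hq hpq
  rw [Finset.mem_image] at hp hq
  obtain ⟨x, hx, rfl⟩ := hp
  obtain ⟨y, hy, rfl⟩ := hq
  rw [hF', Finset.mem_filter] at hx hy
  by_contra hne
  have hdx : (U (w x)).Dom := Part.dom_iff_mem.mpr ⟨x, (hwspec x hx.2).1⟩
  have hdy : (U (w y)).Dom := Part.dom_iff_mem.mpr ⟨y, (hwspec y hy.2).1⟩
  exact hpf (w x) (w y) hpq hne hdx hdy
end
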